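/- The function W : (ℂ∖{0})² → ℂ defined by W(y_1, y_2) = 2y_1 + y_2 + y_1^{−1} + y_1^{−1}y_2^{−1} + 3·y_2^{−1} + y_1 y_2^{−1} has exactly 6 critical points, and each of these critical points is nondegenerate. -/

import Mathlib

/-- The potential function of the monotone fiber `L(1,1)` in `X̂₅` with the chosen bulk deformation (energy factor dropped). -/
noncomputable def W : ℂ → ℂ → ℂ := fun y₁ y₂ =>
  2 * y₁ + y₂ + y₁⁻¹ + y₁⁻¹ * y₂⁻¹ + 3 * y₂⁻¹ + y₁ * y₂⁻¹

/-- A point of `(ℂ∖{0})²` is a critical point of `W` if both partial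
derivatives of `W` vanish there. -/
def IsCritPt (p : ℂ × ℂ) : Prop :=
  p.1 ≠ 0 ∧ p.2 ≠ 0 ∧
    deriv (fun z => W z p.2) p.1 = 0 ∧ deriv (fun z => W p.1 z) p.2 = 0

/-- The Hessian determinant
`(∂²W/∂y₁²)(∂²W/∂y₂²) - (∂²W/∂y₁∂y₂)²` of `W` at a point. -/
noncomputable def hessDet (p : ℂ × ℂ) : ℂ :=
  deriv (deriv (fun z => W z p.2)) p.1 * deriv (deriv (fun z => W p.1 z)) p.2
    - (deriv (fun w => deriv (fun z => W z w) p.1) p.2) ^ 2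

/-!
Writing `(x, y)` for `(y₁, y₂)`, the critical point equations are, after clearing denominators,
`x²(2y + 1) = y + 1` and `xy² = x² + 3x + 1`. Their sum, the second multiplied by `2y + 1`, gives
`x (2y + 1)(y² - 3) = 3y + 2`, so `x` is a rational function of `y`, and substituting it back
leaves the sextic `critPoly`. This sextic has an explicit Bézout identity with its derivative,
so it has six distinct roots, each giving one critical point. Up to the factor `x⁴y⁴` the Hessian
determinant is `4(y + 1)(x² + 3x + 1) - (1 - x²)²`; eliminating `x` from its vanishing on the
critical locus leaves a cubic in `y` which has another Bézout identity with the sextic.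
-/

open Polynomial

section RootCount

variable {K : Type*} [Field K]

theorem Polynomial.separable_of_mul_add_mul_derivative_eq_C {p a b : K[X]} {c : K} (hc : c ≠ 0)
    (h : a * p + b * derivative p = C c) : p.Separable :=
  (separable_def' p).2 ⟨C c⁻¹ * a, C c⁻¹ * b, by
    rw [mul_assoc, mul_assoc, ← mul_add, h, ← C_mul, inv_mul_cancel₀ hc, C_1]⟩

theorem Polynomial.ncard_setOf_isRoot_of_separable [IsAlgClosed K] {p : K[X]}
    (hp : p.Separable) : {x | p.IsRoot x}.ncard = p.natDegree := by
  classical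
  have hroots : {x | p.IsRoot x} = ↑p.roots.toFinset := by
    ext x
    simp [mem_roots hp.ne_zero]
  rw [hroots, Set.ncard_coe_finset, Multiset.toFinset_card_of_nodup (nodup_roots hp),
    IsAlgClosed.card_roots_eq_natDegree]

end RootCount

section Derivatives

variable {x y : ℂ}

theorem hasDerivAt_W_fst (y : ℂ) (hx : x ≠ 0) :
    HasDerivAt (fun z => W z y) (2 - (x ^ 2)⁻¹ - (x ^ 2)⁻¹ * y⁻¹ + y⁻¹) x := by
  have hinv : HasDerivAt (fun z : ℂ => z⁻¹) (-(x ^ 2)⁻¹) x := hasDerivAt_inv hx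
  have h := (((((((hasDerivAt_id x).const_mul 2).add_const y).add hinv).add
    (hinv.mul_const y⁻¹)).add_const (3 * y⁻¹)).add ((hasDerivAt_id x).mul_const y⁻¹))
  exact h.congr_deriv (by ring)

theorem hasDerivAt_W_snd (x : ℂ) (hy : y ≠ 0) :
    HasDerivAt (fun z => W x z) (1 - x⁻¹ * (y ^ 2)⁻¹ - 3 * (y ^ 2)⁻¹ - x * (y ^ 2)⁻¹) y := by
  have hinv : HasDerivAt (fun z : ℂ => z⁻¹) (-(y ^ 2)⁻¹) y := hasDerivAt_inv hy
  have h := (((((hasDerivAt_const y (2 * x)).add (hasDerivAt_id y)).add_const x⁻¹).add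
    (hinv.const_mul x⁻¹)).add (hinv.const_mul 3)).add (hinv.const_mul x)
  exact h.congr_deriv (by ring)

theorem hasDerivAt_inv_sq (hx : x ≠ 0) :
    HasDerivAt (fun z : ℂ => (z ^ 2)⁻¹) (-(2 * x ^ 1) / (x ^ 2) ^ 2) x :=
  (hasDerivAt_pow 2 x).inv (pow_ne_zero 2 hx)

theorem deriv_deriv_W_fst (y : ℂ) (hx : x ≠ 0) :
    deriv (deriv (fun z => W z y)) x = 2 * x / (x ^ 2) ^ 2 * (1 + y⁻¹) := by
  have hfirst : deriv (fun z => W z y) =ᶠ[nhds x]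
      fun z => 2 - (z ^ 2)⁻¹ - (z ^ 2)⁻¹ * y⁻¹ + y⁻¹ := by
    filter_upwards [eventually_ne_nhds hx] with z hz
    exact (hasDerivAt_W_fst y hz).deriv
  rw [hfirst.deriv_eq]
  have h := (((hasDerivAt_const x 2).sub (hasDerivAt_inv_sq hx)).sub
    ((hasDerivAt_inv_sq hx).mul_const y⁻¹)).add_const y⁻¹
  exact h.deriv.trans (by ring)

theorem deriv_deriv_W_snd (x : ℂ) (hy : y ≠ 0) :
    deriv (deriv (fun z => W x z)) y = 2 * y / (y ^ 2) ^ 2 * (x⁻¹ + 3 + x) := by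
  have hfirst : deriv (fun z => W x z) =ᶠ[nhds y]
      fun z => 1 - x⁻¹ * (z ^ 2)⁻¹ - 3 * (z ^ 2)⁻¹ - x * (z ^ 2)⁻¹ := by
    filter_upwards [eventually_ne_nhds hy] with z hz
    exact (hasDerivAt_W_snd x hz).deriv
  rw [hfirst.deriv_eq]
  have h := (((hasDerivAt_const y 1).sub ((hasDerivAt_inv_sq hy).const_mul x⁻¹)).sub
    ((hasDerivAt_inv_sq hy).const_mul 3)).sub ((hasDerivAt_inv_sq hy).const_mul x)
  exact h.deriv.trans (by ring)

theorem deriv_deriv_W_fst_snd (hx : x ≠ 0) (hy : y ≠ 0) :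
    deriv (fun w => deriv (fun z => W z w) x) y = ((x ^ 2)⁻¹ - 1) * (y ^ 2)⁻¹ := by
  have hfirst : (fun w => deriv (fun z => W z w) x) =
      fun w => 2 - (x ^ 2)⁻¹ - (x ^ 2)⁻¹ * w⁻¹ + w⁻¹ :=
    funext fun w => (hasDerivAt_W_fst w hx).deriv
  rw [hfirst]
  have hinv : HasDerivAt (fun w : ℂ => w⁻¹) (-(y ^ 2)⁻¹) y := hasDerivAt_inv hy
  have h := ((hasDerivAt_const y (2 - (x ^ 2)⁻¹)).sub (hinv.const_mul (x ^ 2)⁻¹)).add hinv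
  exact h.deriv.trans (by ring)

theorem hessDet_mul_pow_four (hx : x ≠ 0) (hy : y ≠ 0) :
    hessDet (x, y) * (x ^ 4 * y ^ 4) = 4 * (y + 1) * (x ^ 2 + 3 * x + 1) - (1 - x ^ 2) ^ 2 := by
  rw [hessDet, deriv_deriv_W_fst y hx, deriv_deriv_W_snd x hy, deriv_deriv_W_fst_snd hx hy]
  field_simp
  ring

end Derivatives

noncomputable def critPoly : ℂ[X] :=
  2 * X ^ 6 + 3 * X ^ 5 - 11 * X ^ 4 - 18 * X ^ 3 + 3 * X ^ 2 + 15 * X + 5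

section CriticalLocus

variable {x y : ℂ}

theorem isCritPt_iff : IsCritPt (x, y) ↔
    x ≠ 0 ∧ y ≠ 0 ∧ x ^ 2 * (2 * y + 1) = y + 1 ∧ x * y ^ 2 = x ^ 2 + 3 * x + 1 := by
  refine and_congr_right fun hx => and_congr_right fun hy => and_congr ?_ ?_
  · rw [(hasDerivAt_W_fst y hx).deriv]
    field_simp
    constructor <;> intro h <;> linear_combination h
  · rw [(hasDerivAt_W_snd x hy).deriv]
    field_simp
    constructor <;> intro h <;> linear_combination h

theorem mul_eq_of_crit_eqns (h₁ : x ^ 2 * (2 * y + 1) = y + 1)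
    (h₂ : x * y ^ 2 = x ^ 2 + 3 * x + 1) : x * ((2 * y + 1) * (y ^ 2 - 3)) = 3 * y + 2 := by
  linear_combination (2 * y + 1) * h₂ + h₁

theorem eval_critPoly (y : ℂ) :
    critPoly.eval y = 2 * y ^ 6 + 3 * y ^ 5 - 11 * y ^ 4 - 18 * y ^ 3 + 3 * y ^ 2 + 15 * y + 5 := by
  simp [critPoly]

theorem natDegree_critPoly : critPoly.natDegree = 6 := by
  unfold critPoly
  compute_degree!

theorem separable_critPoly : critPoly.Separable := by
  refine separable_of_mul_add_mul_derivative_eq_C (c := 7770108055) (by norm_num)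
    (a := -1428708168 * X ^ 4 - 3009432150 * X ^ 3 + 6370770981 * X ^ 2 + 10671366546 * X
      - 5781215314)
    (b := 238118028 * X ^ 5 + 561101532 * X ^ 4 - 1447363759 * X ^ 3 - 3334854117 * X ^ 2
      + 1246061542 * X + 2445078975) ?_
  simp only [critPoly, derivative_add, derivative_sub, derivative_mul, derivative_X_pow,
    derivative_ofNat, derivative_X, Nat.cast_ofNat, map_ofNat]
  ring

theorem factors_ne_zero_of_isRoot_critPoly (h : critPoly.IsRoot y) :
    y ≠ 0 ∧ 2 * y + 1 ≠ 0 ∧ y ^ 2 - 3 ≠ 0 ∧ 3 * y + 2 ≠ 0 := by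
  rw [IsRoot.def, eval_critPoly] at h
  refine ⟨?_, ?_, ?_, ?_⟩ <;> intro h0
  · subst h0
    norm_num at h
  · obtain rfl : y = -1 / 2 := by linear_combination h0 / 2
    norm_num at h
  · have hlin : 12 * y + 31 = 0 := by
      linear_combination (2 * y ^ 4 + 3 * y ^ 3 - 5 * y ^ 2 - 9 * y - 12) * h0 - h
    have : (529 : ℂ) = 0 := by linear_combination 144 * h0 - (12 * y - 31) * hlin
    norm_num at this
  · obtain rfl : y = -2 / 3 := by linear_combination h0 / 3
    norm_num at h

theorem isRoot_critPoly_of_crit_eqns (h₁ : x ^ 2 * (2 * y + 1) = y + 1)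
    (h₂ : x * y ^ 2 = x ^ 2 + 3 * x + 1) : critPoly.IsRoot y := by
  have hx := mul_eq_of_crit_eqns h₁ h₂
  rw [IsRoot.def, eval_critPoly]
  linear_combination (x * ((2 * y + 1) * (y ^ 2 - 3)) + 3 * y + 2) * hx
    - (2 * y + 1) * (y ^ 2 - 3) ^ 2 * h₁

theorem crit_eqns_of_isRoot_critPoly (h : critPoly.IsRoot y)
    (hx : x * ((2 * y + 1) * (y ^ 2 - 3)) = 3 * y + 2) :
    x ^ 2 * (2 * y + 1) = y + 1 ∧ x * y ^ 2 = x ^ 2 + 3 * x + 1 := by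
  obtain ⟨-, h2y, hy3, -⟩ := factors_ne_zero_of_isRoot_critPoly h
  rw [IsRoot.def, eval_critPoly] at h
  have h₁ : x ^ 2 * (2 * y + 1) = y + 1 := by
    apply mul_right_cancel₀ (mul_ne_zero h2y (pow_ne_zero 2 hy3))
    linear_combination (x * ((2 * y + 1) * (y ^ 2 - 3)) + 3 * y + 2) * hx - h
  refine ⟨h₁, mul_right_cancel₀ h2y ?_⟩
  linear_combination hx - h₁

theorem isCritPt_iff_isRoot_critPoly :
    IsCritPt (x, y) ↔ critPoly.IsRoot y ∧ x = (3 * y + 2) / ((2 * y + 1) * (y ^ 2 - 3)) := by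
  rw [isCritPt_iff]
  constructor
  · rintro ⟨-, -, h₁, h₂⟩
    have hroot := isRoot_critPoly_of_crit_eqns h₁ h₂
    obtain ⟨-, h2y, hy3, -⟩ := factors_ne_zero_of_isRoot_critPoly hroot
    exact ⟨hroot, (eq_div_iff (mul_ne_zero h2y hy3)).2 (mul_eq_of_crit_eqns h₁ h₂)⟩
  · rintro ⟨hroot, hx⟩
    obtain ⟨hy, h2y, hy3, h3y⟩ := factors_ne_zero_of_isRoot_critPoly hroot
    rw [eq_div_iff (mul_ne_zero h2y hy3)] at hx
    refine ⟨fun hx0 => h3y ?_, hy, crit_eqns_of_isRoot_critPoly hroot hx⟩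
    rw [← hx, hx0, zero_mul]

theorem hessDet_ne_zero_of_isCritPt {p : ℂ × ℂ} (hp : IsCritPt p) : hessDet p ≠ 0 := by
  obtain ⟨x, y⟩ := p
  obtain ⟨hx, hy, h₁, h₂⟩ := isCritPt_iff.1 hp
  have hP := isRoot_critPoly_of_crit_eqns h₁ h₂
  rw [IsRoot.def, eval_critPoly] at hP
  have hX := mul_eq_of_crit_eqns h₁ h₂
  intro h0
  have hH : 4 * (y + 1) * (x ^ 2 + 3 * x + 1) - (1 - x ^ 2) ^ 2 = 0 := by
    rw [← hessDet_mul_pow_four hx hy, h0, zero_mul]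
  have hA : 4 * (y + 1) * (x * y ^ 2) - (1 - x ^ 2) ^ 2 = 0 := by
    linear_combination hH + 4 * (y + 1) * h₂
  have hB : 4 * (y + 1) * (x * y ^ 2) * (2 * y + 1) ^ 2 - y ^ 2 = 0 := by
    linear_combination (2 * y + 1) ^ 2 * hA - ((1 - x ^ 2) * (2 * y + 1) + y) * h₁
  have hQ : y ^ 2 * (24 * y ^ 3 + 51 * y ^ 2 + 36 * y + 11) = 0 := by
    linear_combination (y ^ 2 - 3) * hB - 4 * (y + 1) * y ^ 2 * (2 * y + 1) * hX
  have hcubic := (mul_eq_zero.1 hQ).resolve_left (pow_ne_zero 2 hy)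
  have : (67566157 : ℂ) = 0 := by
    linear_combination (-57691071 - 91725912 * y - 63293184 * y ^ 2) * hP +
      (32365592 + 14439483 * y - 27730797 * y ^ 2 - 29885721 * y ^ 3 + 4347306 * y ^ 4
        + 5274432 * y ^ 5) * hcubic
  norm_num at this

end CriticalLocus

/-- `W` has exactly 6 critical points in `(ℂ∖{0})²`, and each of them is
nondegenerate (nonvanishing Hessian determinant). -/
theorem W_critical_points :
    {p : ℂ × ℂ | IsCritPt p}.ncard = 6 ∧
      ∀ p : ℂ × ℂ, IsCritPt p → hessDet p ≠ 0 := by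
  have hgraph : {p : ℂ × ℂ | IsCritPt p} =
      (fun y => ((3 * y + 2) / ((2 * y + 1) * (y ^ 2 - 3)), y)) '' {y | critPoly.IsRoot y} := by
    ext ⟨x, y⟩
    simp [isCritPt_iff_isRoot_critPoly, eq_comm]
  refine ⟨?_, fun p => hessDet_ne_zero_of_isCritPt⟩
  rw [hgraph, Set.ncard_image_of_injective _ fun _ _ h => congrArg Prod.snd h,
    ncard_setOf_isRoot_of_separable separable_critPoly, natDegree_critPoly]
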